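/- arXiv:2505.00860 — 3 statements merged into one kernel-verified Lean document; each statement's English description precedes it below -/
import Mathlib

section
/- Let H be a real separable Hilbert space He and let T : H → H be a compact, self-adjoint, positive (⟨f, T f⟩ ≥ 0 for all f), injective bounded linear operator. Then for every b ∈ H, b belongs to the closed linear span of {T^j b : j ≥ 1}; equivalently, for every ε > 0 there exist p ∈ ℕ and real coefficients γ₁, …, γ_p such that ‖b − Σ_{j=1}^p γ_j T^j b‖ < ε. -/
/-!
Let `K` be the closure of the span of the `T^(j+1) b`. It is `T`-invariant, hence so is `Kᗮ`
by symmetry of `T`. Writing `b = m + w` with `m ∈ K` and `w ∈ Kᗮ`, the vector `T w = T b - T m`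
lies in `K ∩ Kᗮ = 0`, so `w = 0` by injectivity.
-/

open scoped InnerProductSpace
open Set Submodule

theorem Submodule.exists_fin_sum_eq_of_mem_span_range {R M : Type*} [Semiring R]
    [AddCommMonoid M] [Module R M] {v : ℕ → M} {x : M} (hx : x ∈ span R (range v)) :
    ∃ (p : ℕ) (γ : Fin p → R), ∑ j : Fin p, γ j • v j = x := by
  obtain ⟨c, rfl⟩ := Finsupp.mem_span_range_iff_exists_finsupp.1 hx
  obtain ⟨p, hp⟩ := c.support.exists_nat_subset_range
  refine ⟨p, fun j => c j, ?_⟩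
  rw [Fin.sum_univ_eq_sum_range (fun i => c i • v i), Finsupp.sum_of_support_subset c hp _ (by simp)]

theorem ContinuousLinearMap.mapsTo_span_range_pow_succ_apply {R M : Type*} [Semiring R]
    [AddCommMonoid M] [Module R M] [TopologicalSpace M] (T : M →L[R] M) (b : M) :
    MapsTo T (span R (range fun j : ℕ => (T ^ (j + 1)) b))
      (span R (range fun j : ℕ => (T ^ (j + 1)) b)) := by
  intro x hx
  have hmap : (span R (range fun j : ℕ => (T ^ (j + 1)) b)).map (T : M →ₗ[R] M) ≤
      span R (range fun j : ℕ => (T ^ (j + 1)) b) := by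
    rw [map_span, span_le]
    rintro _ ⟨_, ⟨j, rfl⟩, rfl⟩
    exact subset_span ⟨j + 1, show (T ^ (j + 1 + 1)) b = T ((T ^ (j + 1)) b) by
      rw [pow_succ' T (j + 1)]; rfl⟩
  exact hmap ⟨x, hx, rfl⟩

theorem LinearMap.IsSymmetric.mem_of_apply_mem {𝕜 E : Type*} [RCLike 𝕜] [NormedAddCommGroup E]
    [InnerProductSpace 𝕜 E] {T : E →ₗ[𝕜] E} (hT : T.IsSymmetric) (hinj : Function.Injective T)
    {K : Submodule 𝕜 E} [K.HasOrthogonalProjection] (hK : MapsTo T K K) {b : E}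
    (hb : T b ∈ K) : b ∈ K := by
  obtain ⟨m, hm, w, hw, rfl⟩ := K.exists_add_mem_mem_orthogonal b
  have hTw_mem : T w ∈ K := by simpa using K.sub_mem hb (hK hm)
  have hTw_mem_orthogonal : T w ∈ Kᗮ := fun u hu => by rw [← hT]; exact hw _ (hK hu)
  have hTw : T w = 0 := by
    simpa [K.inf_orthogonal_eq_bot] using
      (K.mem_inf.2 ⟨hTw_mem, hTw_mem_orthogonal⟩ : T w ∈ K ⊓ Kᗮ)
  rwa [hinj (hTw.trans (map_zero T).symm), add_zero]

theorem stmt_0_general {H : Type*} [NormedAddCommGroup H] [InnerProductSpace ℝ H]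
    [CompleteSpace H]
    (T : H →L[ℝ] H)
    (hsa : ∀ f g : H, ⟪T f, g⟫_ℝ = ⟪f, T g⟫_ℝ)
    (hinj : Function.Injective (⇑T)) :
    ∀ b : H,
      b ∈ closure (Submodule.span ℝ (Set.range fun j : ℕ => (T ^ (j + 1)) b) : Set H) ∧
      ∀ ε > (0 : ℝ), ∃ (p : ℕ) (γ : Fin p → ℝ),
        ‖b - ∑ j : Fin p, γ j • (T ^ (j.val + 1)) b‖ < ε := by
  intro b
  set S := span ℝ (range fun j : ℕ => (T ^ (j + 1)) b)
  have hK : MapsTo T S.topologicalClosure S.topologicalClosure :=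
    (T.mapsTo_span_range_pow_succ_apply b).closure T.continuous
  have hTb : T b ∈ S.topologicalClosure :=
    S.le_topologicalClosure (subset_span ⟨0, by simp⟩)
  have hb : b ∈ closure (S : Set H) :=
    LinearMap.IsSymmetric.mem_of_apply_mem (T := (T : H →ₗ[ℝ] H)) hsa hinj hK hTb
  refine ⟨hb, fun ε hε => ?_⟩
  obtain ⟨y, hyS, hy⟩ := Metric.mem_closure_iff.1 hb ε hε
  obtain ⟨p, γ, rfl⟩ := exists_fin_sum_eq_of_mem_span_range hyS
  exact ⟨p, γ, by rwa [← dist_eq_norm]⟩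

/-- Lemma 2: for a compact, self-adjoint, positive, injective operator `T` on a real
separable Hilbert space, every `b` lies in the closed linear span of `{T^j b : j ≥ 1}`;
equivalently, `b` can be approximated arbitrarily well by linear combinations
`Σ_{j=1}^p γ_j T^j b`. -/
theorem stmt_0 {H : Type*} [NormedAddCommGroup H] [InnerProductSpace ℝ H]
    [CompleteSpace H] [TopologicalSpace.SeparableSpace H]
    (T : H →L[ℝ] H)
    (hcompact : IsCompactOperator (⇑T))
    (hsa : ∀ f g : H, ⟪T f, g⟫_ℝ = ⟪f, T g⟫_ℝ)
    (hpos : ∀ f : H, 0 ≤ ⟪f, T f⟫_ℝ)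
    (hinj : Function.Injective (⇑T)) :
    ∀ b : H,
      b ∈ closure (Submodule.span ℝ (Set.range fun j : ℕ => (T ^ (j + 1)) b) : Set H) ∧
      ∀ ε > (0 : ℝ), ∃ (p : ℕ) (γ : Fin p → ℝ),
        ‖b - ∑ j : Fin p, γ j • (T ^ (j.val + 1)) b‖ < ε :=
  stmt_0_general T hsa hinj
end

section
/- Let H be a real inner product space, C : H → H a linear map, and b ∈ H. Suppose vectors ρ₁, …, ρ_p ∈ H satisfy: ρ₁ = c^{(0)} C b for some real constant c^{(0)}, and for each j = 1, …, p−1, ρ_{j+1} = c₀^{(j)} [ C( b − Σ_{l=1}^{j} ⟨b, ρ_l⟩ ρ_l ) + Σ_{l=1}^{j} c_l^{(j)} ρ_l ] for some real constants c₀^{(j)}, c₁^{(j)}, …, c_j^{(j)}. If ρ₁, …, ρ_p are linearly independent, then span{ρ₁, …, ρ_p} = span{C b, C² b, …, C^p b}. -/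
/-!
Each PLS direction `ρⱼ` lies in `span {C b, …, C^{j+1} b}`: the recursion only applies `C` to
`b` and to a combination of earlier directions, and adds earlier directions. Hence the span of
`ρ₀, …, ρ_{p-1}` sits inside the `p`-th Krylov space, whose dimension is at most `p`; linear
independence makes the span `p`-dimensional, so the two spaces coincide.
-/

open scoped InnerProductSpace

open Submodule Module

section Krylov

variable {R M : Type*} [Semiring R] [AddCommMonoid M] [Module R M] (C : M →ₗ[R] M) (v : M)

/-- Shifted by one from the usual convention: spanned by `C v, C² v, …, Cⁿ v`. -/
def krylovSubspace (n : ℕ) : Submodule R M :=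
  span R ((fun j => (C ^ (j + 1)) v) '' Set.Iio n)

theorem krylovSubspace_mono : Monotone (krylovSubspace C v) :=
  fun _ _ hmn => span_mono (Set.image_mono (Set.Iio_subset_Iio hmn))

theorem pow_succ_apply_mem_krylovSubspace {i n : ℕ} (hi : i < n) :
    (C ^ (i + 1)) v ∈ krylovSubspace C v n :=
  subset_span ⟨i, hi, rfl⟩

theorem apply_mem_krylovSubspace {n : ℕ} (hn : 0 < n) : C v ∈ krylovSubspace C v n := by
  simpa using pow_succ_apply_mem_krylovSubspace C v hn

theorem map_krylovSubspace_le (n : ℕ) :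
    (krylovSubspace C v n).map C ≤ krylovSubspace C v (n + 1) := by
  rw [krylovSubspace, map_span, span_le]
  rintro _ ⟨_, ⟨i, hi, rfl⟩, rfl⟩
  rw [← Module.End.mul_apply, ← pow_succ']
  exact pow_succ_apply_mem_krylovSubspace C v (Nat.succ_lt_succ hi)

theorem apply_mem_krylovSubspace_succ {n : ℕ} {x : M} (hx : x ∈ krylovSubspace C v n) :
    C x ∈ krylovSubspace C v (n + 1) :=
  map_krylovSubspace_le C v n (mem_map_of_mem hx)

theorem krylovSubspace_eq_span_range (n : ℕ) :
    krylovSubspace C v n = span R (Set.range fun i : Fin n => (C ^ (i.val + 1)) v) := by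
  rw [krylovSubspace, ← Fin.range_val, ← Set.range_comp]
  rfl

instance (n : ℕ) : Module.Finite R (krylovSubspace C v n) :=
  Module.Finite.span_of_finite R ((Set.finite_Iio n).image _)

end Krylov

theorem finrank_krylovSubspace_le {R M : Type*} [Ring R] [StrongRankCondition R]
    [AddCommGroup M] [Module R M] (C : M →ₗ[R] M) (v : M) (n : ℕ) :
    finrank R (krylovSubspace C v n) ≤ n := by
  rw [krylovSubspace_eq_span_range]
  exact (finrank_range_le_card (R := R) _).trans_eq (Fintype.card_fin n)

theorem mem_krylovSubspace_of_recursion {R M : Type*} [Ring R] [AddCommGroup M] [Module R M]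
    {C : M →ₗ[R] M} {b : M} {p : ℕ} {ρ : ℕ → M} (a : ℕ → R)
    (hρ0 : ∃ c : R, ρ 0 = c • C b)
    (hρrec : ∀ j : ℕ, j + 1 < p → ∃ (c0 : R) (c : ℕ → R),
      ρ (j + 1) = c0 • (C (b - ∑ l ∈ Finset.range (j + 1), a l • ρ l)
        + ∑ l ∈ Finset.range (j + 1), c l • ρ l)) :
    ∀ j < p, ρ j ∈ krylovSubspace C b (j + 1) := by
  intro j
  induction j using Nat.strong_induction_on with
  | _ j ih =>
  intro hj
  rcases j with _ | j
  · obtain ⟨c, hc⟩ := hρ0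
    rw [hc]
    exact smul_mem _ c (apply_mem_krylovSubspace C b one_pos)
  · obtain ⟨c0, c, hρ⟩ := hρrec j hj
    have mem_of_lt {l : ℕ} (hl : l ∈ Finset.range (j + 1)) :
        ρ l ∈ krylovSubspace C b (j + 1) :=
      have hl := Finset.mem_range.mp hl
      krylovSubspace_mono C b hl (ih l hl (by omega))
    have hsum (d : ℕ → R) : ∑ l ∈ Finset.range (j + 1), d l • ρ l ∈ krylovSubspace C b (j + 1) :=
      sum_mem fun l hl => smul_mem _ _ (mem_of_lt hl)
    rw [hρ, map_sub]
    refine smul_mem _ c0 (add_mem (sub_mem ?_ ?_) ?_)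
    · exact apply_mem_krylovSubspace C b (Nat.succ_pos _)
    · exact apply_mem_krylovSubspace_succ C b (hsum a)
    · exact krylovSubspace_mono C b (Nat.le_succ _) (hsum c)

theorem stmt_1_general {H : Type*} [NormedAddCommGroup H] [InnerProductSpace ℝ H]
    (C : H →ₗ[ℝ] H) (b : H) (p : ℕ) (ρ : ℕ → H)
    (hρ0 : ∃ c : ℝ, ρ 0 = c • C b)
    (hρrec : ∀ j : ℕ, j + 1 < p → ∃ (c0 : ℝ) (c : ℕ → ℝ),
      ρ (j + 1) = c0 • (C (b - ∑ l ∈ Finset.range (j + 1), ⟪b, ρ l⟫_ℝ • ρ l)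
        + ∑ l ∈ Finset.range (j + 1), c l • ρ l))
    (hli : LinearIndependent ℝ (fun i : Fin p => ρ i.val)) :
    Submodule.span ℝ (ρ '' Set.Iio p) =
      Submodule.span ℝ ((fun j : ℕ => (C ^ (j + 1)) b) '' Set.Iio p) := by
  have hmem := mem_krylovSubspace_of_recursion (fun l => ⟪b, ρ l⟫_ℝ) hρ0 hρrec
  have hle : span ℝ (ρ '' Set.Iio p) ≤ krylovSubspace C b p := by
    rw [span_le]
    rintro _ ⟨j, hj, rfl⟩
    exact krylovSubspace_mono C b (Nat.succ_le_of_lt hj) (hmem j hj)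
  have hrank : finrank ℝ (span ℝ (ρ '' Set.Iio p)) = p := by
    rw [← Fin.range_val, ← Set.range_comp]
    exact (finrank_span_eq_card hli).trans (Fintype.card_fin p)
  change _ = krylovSubspace C b p
  exact eq_of_le_of_finrank_le hle ((finrank_krylovSubspace_le C b p).trans hrank.ge)

/-- The partial least squares basis functions `ρ₁, …, ρ_p`, satisfying the recursion of
Lemma 1 in terms of the operator `C` and slope `b`, span the same space as the
Krylov functions `C b, C² b, …, C^p b` (provided they are linearly independent).
Here `ρ (j)` represents `ρ_{j+1}` (0-based indexing). -/
theorem stmt_1 {H : Type*} [NormedAddCommGroup H] [InnerProductSpace ℝ H]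
    (C : H →ₗ[ℝ] H) (b : H) (p : ℕ) (hp : 0 < p) (ρ : ℕ → H)
    (hρ0 : ∃ c : ℝ, ρ 0 = c • C b)
    (hρrec : ∀ j : ℕ, j + 1 < p → ∃ (c0 : ℝ) (c : ℕ → ℝ),
      ρ (j + 1) = c0 • (C (b - ∑ l ∈ Finset.range (j + 1), ⟪b, ρ l⟫_ℝ • ρ l)
        + ∑ l ∈ Finset.range (j + 1), c l • ρ l))
    (hli : LinearIndependent ℝ (fun i : Fin p => ρ i.val)) :
    Submodule.span ℝ (ρ '' Set.Iio p) =
      Submodule.span ℝ ((fun j : ℕ => (C ^ (j + 1)) b) '' Set.Iio p) :=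
  stmt_1_general C b p ρ hρ0 hρrec hli
end

section
/- Consider the partially functional linear model: let (Ω, P) be a probability space, H a real separable Hilbert space, z : Ω → ℝ^q square-integrable with E[z] = 0 and Σ_z = E[z zᵀ] invertible, x : Ω → H Bochner square-integrable with E[x] = 0, and ε : Ω → ℝ square-integrable with E[ε z] = 0 ∈ ℝ^q and E[ε x] = 0 ∈ H. Fix α₀ ∈ ℝ, α ∈ ℝ^q, b ∈ H and set y = α₀ + ⟨z, α⟩ + ⟨x, b⟩ + ε. Let g_l = E[z_l x], M(z, x) = x − Σ_{k,l} z_k (Σ_z⁻¹)_{kl} g_l, and define the residual covariance operator C f = E[ ⟨M(z,x), f⟩ M(z,x) ]. Then, with m(z, y) = y − zᵀ Σ_z⁻¹ E[z y], one has E[ m(z, y) · M(z, x) ] = C(b) in H. -/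
open MeasureTheory
open scoped InnerProductSpace Matrix

/-!
Inverting `Σ_z` in `E[z y] = Σ_z α + E[z ⟨x, b⟩]` shows that the regression of `y` on `z`
removes `⟨z, α⟩` exactly, so that pointwise `m(z, y) = (α₀ + ε) + ⟨M(z, x), b⟩`. Since `M(z, x)`
is `x` minus a combination of the coordinates of `z`, and `α₀ + ε` is orthogonal in `L²` to `x`
and to every `z_k` (all are centred and uncorrelated with `ε`), `E[(α₀ + ε) M(z, x)] = 0`,
leaving `E[m(z, y) M(z, x)] = E[⟨M(z, x), b⟩ M(z, x)] = C b`.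
-/

section SecondMoments

variable {Ω : Type*} [MeasurableSpace Ω] {P : Measure Ω}
  {E : Type*} [NormedAddCommGroup E] [NormedSpace ℝ E]

theorem MeasureTheory.MemLp.integrable_smul {p q : ENNReal} [ENNReal.HolderTriple p q 1]
    {φ : Ω → ℝ} {f : Ω → E} (hφ : MemLp φ p P) (hf : MemLp f q P) :
    Integrable (fun ω => φ ω • f ω) P :=
  memLp_one_iff_integrable.1 (hf.smul hφ)

theorem integral_const_add_smul (a : ℝ) {ε : Ω → ℝ} {f : Ω → E} (hf : Integrable f P)
    (hεf : Integrable (fun ω => ε ω • f ω) P) :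
    ∫ ω, (a + ε ω) • f ω ∂P = a • ∫ ω, f ω ∂P + ∫ ω, ε ω • f ω ∂P := by
  simp_rw [add_smul]
  rw [integral_add (f := fun ω => a • f ω) (hf.smul a) hεf, integral_smul]

theorem integral_smul_sub_sum_smul_eq_zero [CompleteSpace E] {ι : Type*} [Fintype ι]
    {φ : Ω → ℝ} {x : Ω → E} {z : Ω → ι → ℝ} (c : ι → E)
    (hφ : MemLp φ 2 P) (hx : MemLp x 2 P) (hz : ∀ k, MemLp (fun ω => z ω k) 2 P)
    (hφx : ∫ ω, φ ω • x ω ∂P = 0) (hφz : ∀ k, ∫ ω, φ ω * z ω k ∂P = 0) :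
    ∫ ω, φ ω • (x ω - ∑ k, z ω k • c k) ∂P = 0 := by
  have hint : ∀ k, Integrable (fun ω => (φ ω * z ω k) • c k) P :=
    fun k => (hφ.integrable_mul (hz k)).smul_const (c k)
  simp_rw [smul_sub, Finset.smul_sum, smul_smul]
  rw [integral_sub (hφ.integrable_smul hx) (integrable_finsetSum _ fun k _ => hint k),
    integral_finsetSum _ fun k _ => hint k, hφx, zero_sub, neg_eq_zero]
  simp only [integral_smul_const, hφz, zero_smul, Finset.sum_const_zero]

end SecondMoments

theorem Matrix.dotProduct_inv_mulVec_mulVec_add {ι R : Type*} [Fintype ι] [DecidableEq ι]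
    [CommRing R] {A : Matrix ι ι R} (hA : IsUnit A.det) (u a w : ι → R) :
    u ⬝ᵥ (A⁻¹ *ᵥ (A *ᵥ a + w)) = u ⬝ᵥ a + u ⬝ᵥ (A⁻¹ *ᵥ w) := by
  rw [Matrix.mulVec_add, Matrix.mulVec_mulVec, Matrix.nonsing_inv_mul _ hA, Matrix.one_mulVec,
    dotProduct_add]

theorem Matrix.sum_sum_mul_mul_eq_dotProduct_mulVec {m n R : Type*} [Fintype m] [Fintype n]
    [NonUnitalSemiring R] (u : m → R) (A : Matrix m n R) (v : n → R) :
    ∑ k, ∑ l, u k * A k l * v l = u ⬝ᵥ (A *ᵥ v) := by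
  simp only [dotProduct, Matrix.mulVec, Finset.mul_sum, mul_assoc]

theorem integral_mul_linear_response {Ω : Type*} [MeasurableSpace Ω] {P : Measure Ω}
    [IsProbabilityMeasure P] {H : Type*} [NormedAddCommGroup H] [InnerProductSpace ℝ H]
    [CompleteSpace H] {ι : Type*} [Fintype ι] {z : Ω → ι → ℝ} {x : Ω → H} {ε : Ω → ℝ}
    (hz : ∀ k, MemLp (fun ω => z ω k) 2 P) (hzmean : ∀ k, ∫ ω, z ω k ∂P = 0)
    (hx : MemLp x 2 P) (hε : MemLp ε 2 P) (hεz : ∀ k, ∫ ω, ε ω * z ω k ∂P = 0)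
    (α₀ : ℝ) (α : ι → ℝ) (b : H) (l : ι) :
    ∫ ω, z ω l * (α₀ + (∑ k, z ω k * α k) + ⟪x ω, b⟫_ℝ + ε ω) ∂P
      = ((Matrix.of fun k m => ∫ ω, z ω k * z ω m ∂P) *ᵥ α) l
        + ⟪∫ ω, z ω l • x ω ∂P, b⟫_ℝ := by
  have hexpand : ∀ ω, z ω l * (α₀ + (∑ k, z ω k * α k) + ⟪x ω, b⟫_ℝ + ε ω)
      = z ω l * α₀ + ∑ k, z ω l * z ω k * α k + ⟪b, z ω l • x ω⟫_ℝ + ε ω * z ω l := by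
    intro ω
    rw [mul_add, mul_add, mul_add, Finset.mul_sum, real_inner_smul_right, real_inner_comm b]
    simp only [mul_assoc]
    ring
  have hconst : Integrable (fun ω => z ω l * α₀) P := ((hz l).integrable one_le_two).mul_const α₀
  have hzz : ∀ k, Integrable (fun ω => z ω l * z ω k * α k) P :=
    fun k => ((hz l).integrable_mul (hz k)).mul_const (α k)
  have hquad : Integrable (fun ω => ∑ k, z ω l * z ω k * α k) P :=
    integrable_finsetSum _ fun k _ => hzz k
  have hcross : Integrable (fun ω => ⟪b, z ω l • x ω⟫_ℝ) P :=
    ((hz l).integrable_smul hx).const_inner b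
  have hnoise : Integrable (fun ω => ε ω * z ω l) P := hε.integrable_mul (hz l)
  simp_rw [hexpand]
  rw [integral_add ?_ hnoise, integral_add ?_ hcross, integral_add hconst hquad,
    integral_mul_const, hzmean, integral_finsetSum _ fun k _ => hzz k,
    integral_inner ((hz l).integrable_smul hx), hεz, real_inner_comm]
  simp only [integral_mul_const, Matrix.mulVec, dotProduct, Matrix.of_apply]
  ring
  exacts [hconst.add hquad, (hconst.add hquad).add hcross]

theorem stmt_8_general {Ω : Type*} [MeasurableSpace Ω] (P : Measure Ω) [IsProbabilityMeasure P]
    {H : Type*} [NormedAddCommGroup H] [InnerProductSpace ℝ H] [CompleteSpace H]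
    {q : ℕ} (z : Ω → Fin q → ℝ) (x : Ω → H) (ε : Ω → ℝ)
    (hz : ∀ k, MemLp (fun ω => z ω k) 2 P)
    (hzmean : ∀ k, ∫ ω, z ω k ∂P = 0)
    (hx : MemLp x 2 P)
    (hxmean : (∫ ω, x ω ∂P) = 0)
    (hε : MemLp ε 2 P)
    (hεz : ∀ k, ∫ ω, ε ω * z ω k ∂P = 0)
    (hεx : (∫ ω, ε ω • x ω ∂P) = 0)
    (Sz : Matrix (Fin q) (Fin q) ℝ)
    (hSz : Sz = Matrix.of fun k l => ∫ ω, z ω k * z ω l ∂P)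
    (hinv : IsUnit Sz.det)
    (g : Fin q → H) (hg : ∀ l, g l = ∫ ω, z ω l • x ω ∂P)
    (α₀ : ℝ) (α : Fin q → ℝ) (b : H)
    (y : Ω → ℝ) (hy : ∀ ω, y ω = α₀ + (∑ k, z ω k * α k) + ⟪x ω, b⟫_ℝ + ε ω)
    (M : Ω → H) (hM : ∀ ω, M ω = x ω - ∑ k, ∑ l, (z ω k * Sz⁻¹ k l) • g l)
    (C : H → H) (hC : ∀ f, C f = ∫ ω, ⟪M ω, f⟫_ℝ • M ω ∂P)
    (my : Ω → ℝ)
    (hmy : ∀ ω, my ω = y ω - ∑ k, ∑ l, z ω k * Sz⁻¹ k l * ∫ ω', z ω' l * y ω' ∂P) :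
    ∫ ω, my ω • M ω ∂P = C b := by
  set c : Fin q → H := fun k => ∑ l, Sz⁻¹ k l • g l
  have hMc : ∀ ω, M ω = x ω - ∑ k, z ω k • c k := fun ω => by
    simp only [hM, c, Finset.smul_sum, smul_smul]
  have hzy : (fun l => ∫ ω, z ω l * y ω ∂P) = Sz *ᵥ α + fun l => ⟪g l, b⟫_ℝ := by
    funext l
    simp only [hy, hSz, hg, integral_mul_linear_response hz hzmean hx hε hεz, Pi.add_apply]
  have hinner : ∀ ω, ⟪M ω, b⟫_ℝ = ⟪x ω, b⟫_ℝ - z ω ⬝ᵥ (Sz⁻¹ *ᵥ fun l => ⟪g l, b⟫_ℝ) := by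
    intro ω
    simp only [hMc, c, inner_sub_left, sum_inner, real_inner_smul_left, dotProduct, Matrix.mulVec,
      Finset.mul_sum]
  have hmy_eq : ∀ ω, my ω = (α₀ + ε ω) + ⟪M ω, b⟫_ℝ := by
    intro ω
    rw [hmy, Matrix.sum_sum_mul_mul_eq_dotProduct_mulVec, hzy,
      Matrix.dotProduct_inv_mulVec_mulVec_add hinv, hinner, hy]
    simp only [dotProduct]
    ring
  have hM2 : MemLp M 2 P := by
    rw [funext hMc]
    exact hx.sub (memLp_finsetSum _ fun k _ => (memLp_top_const (c k)).smul (hz k))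
  have hφ : MemLp (fun ω => α₀ + ε ω) 2 P := (memLp_const α₀).add hε
  have horth : ∫ ω, (α₀ + ε ω) • M ω ∂P = 0 := by
    simp only [hMc]
    refine integral_smul_sub_sum_smul_eq_zero c hφ hx hz ?_ fun k => ?_
    · rw [integral_const_add_smul α₀ (hx.integrable one_le_two) (hε.integrable_smul hx), hxmean,
        hεx, smul_zero, add_zero]
    · simpa [hzmean, hεz] using
        integral_const_add_smul α₀ ((hz k).integrable one_le_two) (hε.integrable_smul (hz k))
  calc ∫ ω, my ω • M ω ∂P
      = ∫ ω, (α₀ + ε ω) • M ω + ⟪M ω, b⟫_ℝ • M ω ∂P := by simp only [hmy_eq, add_smul]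
    _ = C b := by
      rw [integral_add (hφ.integrable_smul hM2) ((hM2.inner_const b).integrable_smul hM2), horth,
        zero_add, hC]

/-- Identity (3.1) of the paper: in the partially functional linear model
`y = α₀ + ⟨z, α⟩ + ⟨x, b⟩ + ε`, one has `E[m(z, y) · M(z, x)] = C(b)`, where `C` is the
residual covariance operator of the residualized functional covariate `M(z, x)`. -/
theorem stmt_8 {Ω : Type*} [MeasurableSpace Ω] (P : Measure Ω) [IsProbabilityMeasure P]
    {H : Type*} [NormedAddCommGroup H] [InnerProductSpace ℝ H] [CompleteSpace H]
    [TopologicalSpace.SeparableSpace H]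
    {q : ℕ} (z : Ω → Fin q → ℝ) (x : Ω → H) (ε : Ω → ℝ)
    (hz : ∀ k, MemLp (fun ω => z ω k) 2 P)
    (hzmean : ∀ k, ∫ ω, z ω k ∂P = 0)
    (hx : MemLp x 2 P)
    (hxmean : (∫ ω, x ω ∂P) = 0)
    (hε : MemLp ε 2 P)
    (hεz : ∀ k, ∫ ω, ε ω * z ω k ∂P = 0)
    (hεx : (∫ ω, ε ω • x ω ∂P) = 0)
    (Sz : Matrix (Fin q) (Fin q) ℝ)
    (hSz : Sz = Matrix.of fun k l => ∫ ω, z ω k * z ω l ∂P)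
    (hinv : IsUnit Sz.det)
    (g : Fin q → H) (hg : ∀ l, g l = ∫ ω, z ω l • x ω ∂P)
    (α₀ : ℝ) (α : Fin q → ℝ) (b : H)
    (y : Ω → ℝ) (hy : ∀ ω, y ω = α₀ + (∑ k, z ω k * α k) + ⟪x ω, b⟫_ℝ + ε ω)
    (M : Ω → H) (hM : ∀ ω, M ω = x ω - ∑ k, ∑ l, (z ω k * Sz⁻¹ k l) • g l)
    (C : H → H) (hC : ∀ f, C f = ∫ ω, ⟪M ω, f⟫_ℝ • M ω ∂P)
    (my : Ω → ℝ)
    (hmy : ∀ ω, my ω = y ω - ∑ k, ∑ l, z ω k * Sz⁻¹ k l * ∫ ω', z ω' l * y ω' ∂P) :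
    ∫ ω, my ω • M ω ∂P = C b :=
  stmt_8_general P z x ε hz hzmean hx hxmean hε hεz hεx Sz hSz hinv g hg α₀ α b y hy M hM C hC my
    hmy
end
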